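/- arXiv:1003.4707 — 2 statements merged into one kernel-verified Lean document; each statement's English description precedes it below -/
import Mathlib

section
/- Let κ be an inaccessible cardinal, and suppose that for every set B ⊆ V_κ of cardinality κ all of whose elements are ordinal L_std-structures there exist distinct M, N ∈ B and an L_std-elementary embedding j : M → N. Then κ is a Vopěnka cardinal, i.e., for every set A ⊆ V_κ of cardinality κ all of whose elements are L_std-structures (with domains of arbitrary form) there exist distinct M, N ∈ A and an L_std-elementary embedding j : M → N. -/
open FirstOrder

universe u

/-- The relations of the standard language `L_std`: one binary relation symbol `ε` and one
unary relation symbol `R`. -/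
inductive LStdRel : ℕ → Type
  | eps : LStdRel 2
  | r : LStdRel 1

/-- The standard first-order language `L_std`, with one binary relation symbol `ε` and one
unary relation symbol `R`. -/
def LStd : FirstOrder.Language := ⟨fun _ => Empty, LStdRel⟩

/-- The `L_std`-structure coded by the ZFC sets `M` (the domain), `E` (a binary relation on `M`,
coded as a set of Kuratowski pairs) and `R` (a unary relation, coded as a subset of `M`). -/
def codedStructure (M E R : ZFSet.{u}) : LStd.Structure ↥M.toSet where
  funMap := fun f _ => f.elim
  RelMap
    | .eps, x => ZFSet.pair (x 0).1 (x 1).1 ∈ E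
    | .r, x => (x 0).1 ∈ R

/-- The ZFC set `S` codes an `L_std`-structure: it is a triple `⟨M, E, R⟩` with `E` a binary
relation on `M` and `R` a unary relation on `M`. -/
def IsLStdCode (S : ZFSet.{u}) : Prop :=
  ∃ M E R : ZFSet.{u}, S = M.pair (E.pair R) ∧
    (∀ p ∈ E, ∃ a ∈ M, ∃ b ∈ M, p = a.pair b) ∧ R ⊆ M

/-- The ZFC set `S` codes an ordinal `L_std`-structure: an `L_std`-structure whose domain is a
(von Neumann) ordinal. -/
def IsOrdinalLStdCode (S : ZFSet.{u}) : Prop :=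
  ∃ M E R : ZFSet.{u}, S = M.pair (E.pair R) ∧ M.IsOrdinal ∧
    (∀ p ∈ E, ∃ a ∈ M, ∃ b ∈ M, p = a.pair b) ∧ R ⊆ M

/-- There is an `L_std`-elementary embedding from the structure coded by `S` into the structure
coded by `T`. -/
def ElemEmbeddable (S T : ZFSet.{u}) : Prop :=
  ∃ M E R N E' R' : ZFSet.{u}, S = M.pair (E.pair R) ∧ T = N.pair (E'.pair R') ∧
    letI := codedStructure M E R
    letI := codedStructure N E' R'
    Nonempty (↥M.toSet ↪ₑ[LStd] ↥N.toSet)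

/-- `VP A`: there are distinct members `M ≠ N` of the set `A` such that there is an
`L_std`-elementary embedding from `M` into `N`. -/
def VP (A : ZFSet.{u}) : Prop :=
  ∃ M ∈ A, ∃ N ∈ A, M ≠ N ∧ ElemEmbeddable M N

/-- `κ` is a Vopěnka cardinal: `κ` is inaccessible, and for every set `A ⊆ V_κ` of cardinality
`κ` all of whose elements are `L_std`-structures, `VP A` holds. -/
def IsVopenka (κ : Cardinal.{u}) : Prop :=
  κ.IsInaccessible ∧
    ∀ A : ZFSet.{u}, (∀ x ∈ A, x.rank < κ.ord) →
      Cardinal.mk ↥A.toSet = Cardinal.lift.{u + 1} κ →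
      (∀ x ∈ A, IsLStdCode x) → VP A

/-!
Given a coded structure `⟨M, E, R⟩ ∈ V_κ`, transport `E` and `R` along a bijection of `M` with the
von Neumann ordinal `|M|`. Since `κ` is a strong limit, `|M| < κ`, so the ordinal copy again lies
in `V_κ`, and it is isomorphic to the original. If distinct members of `A` have equal copies, they
are isomorphic and we are done; otherwise the copies form a set of `κ` ordinal structures, and an
elementary embedding between two of them pulls back along the isomorphisms.
-/

open FirstOrder.Language Cardinal Ordinal Order

namespace ZFSet

instance small_toSet (x : ZFSet.{u}) : Small.{u} ↥x.toSet := small_coe x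

theorem rank_kpair (x y : ZFSet.{u}) : (x.pair y).rank = succ (succ (max x.rank y.rank)) := by
  simp [ZFSet.pair, rank_insert, rank_singleton, max_add_add_right]

theorem rank_lt_rank_kpair_left (x y : ZFSet.{u}) : x.rank < (x.pair y).rank := by
  rw [rank_kpair]
  exact (le_max_left _ _).trans_lt ((lt_succ _).trans (lt_succ _))

theorem rank_kpair_lt {o : Ordinal.{u}} (ho : IsSuccLimit o) {x y : ZFSet.{u}}
    (hx : x.rank < o) (hy : y.rank < o) : (x.pair y).rank < o := by
  rw [rank_kpair]
  exact ho.succ_lt (ho.succ_lt (max_lt hx hy))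

theorem card_lt_of_rank_lt_ord {κ : Cardinal.{u}} (hκ : κ.IsInaccessible) {x : ZFSet.{u}}
    (hx : x.rank < κ.ord) : x.card < κ :=
  calc x.card ≤ (V_ x.rank).card := card_mono (subset_vonNeumann_self x)
    _ = preBeth x.rank := card_vonNeumann _
    _ < preBeth κ.ord := preBeth_lt_preBeth.2 hx
    _ = κ := hκ.preBeth_ord

theorem mk_toSet_toZFSet_ord_card (x : ZFSet.{u}) :
    #↥x.card.ord.toZFSet.toSet = #↥x.toSet := by
  change #↥x.card.ord.toZFSet = #↥x
  rw [cardinalMk_coe_sort, cardinalMk_coe_sort, card_toZFSet, card_ord]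

theorem mk_range_of_injOn {A : ZFSet.{u}} {f : ZFSet.{u} → ZFSet.{u}} (hf : Set.InjOn f A.toSet) :
    #↥(range fun S : ↥A.toSet => f S).toSet = #↥A.toSet := by
  rw [show (range fun S : ↥A.toSet => f S).toSet = Set.range fun S : ↥A.toSet => f S from
    coe_range _]
  exact mk_range_eq _ hf.injective

/-- A left inverse of `ZFSet.pair`; its value at a set that is not a pair is junk. -/
noncomputable def unpair : ZFSet.{u} → ZFSet.{u} × ZFSet.{u} :=
  Function.invFun (Function.uncurry ZFSet.pair)

theorem unpair_pair (x y : ZFSet.{u}) : unpair (x.pair y) = (x, y) :=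
  Function.leftInverse_invFun pair_injective.uncurry (x, y)

end ZFSet

theorem VP.of_range {A : ZFSet.{u}} (f : ZFSet.{u} → ZFSet.{u})
    (hf : ∀ S ∈ A, ∀ T ∈ A, ElemEmbeddable (f S) (f T) → ElemEmbeddable S T)
    (hrefl : ∀ S, ElemEmbeddable (f S) (f S))
    (hrange : Set.InjOn f A.toSet → VP (ZFSet.range fun S : ↥A.toSet => f S)) : VP A := by
  by_cases hinj : Set.InjOn f A.toSet
  · obtain ⟨_, hS, _, hT, hne, hST⟩ := hrange hinj
    obtain ⟨⟨S, hSA⟩, rfl⟩ := ZFSet.mem_range.1 hS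
    obtain ⟨⟨T, hTA⟩, rfl⟩ := ZFSet.mem_range.1 hT
    exact ⟨S, hSA, T, hTA, fun h => hne (h ▸ rfl), hf S hSA T hTA hST⟩
  · simp only [Set.InjOn, not_forall] at hinj
    obtain ⟨S, hSA, T, hTA, hfST, hne⟩ := hinj
    exact ⟨S, hSA, T, hTA, hne, hf S hSA T hTA (hfST ▸ hrefl S)⟩

theorem elemEmbeddable_pair_iff {M E R N F Q : ZFSet.{u}} :
    ElemEmbeddable (M.pair (E.pair R)) (N.pair (F.pair Q)) ↔
      letI := codedStructure M E R
      letI := codedStructure N F Q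
      Nonempty (↥M.toSet ↪ₑ[LStd] ↥N.toSet) := by
  simp only [ElemEmbeddable, ZFSet.pair_inj]
  constructor
  · rintro ⟨_, _, _, _, _, _, ⟨rfl, rfl, rfl⟩, ⟨rfl, rfl, rfl⟩, h⟩
    exact h
  · exact fun h => ⟨M, E, R, N, F, Q, ⟨rfl, rfl, rfl⟩, ⟨rfl, rfl, rfl⟩, h⟩

theorem elemEmbeddable_pair_self (M E R : ZFSet.{u}) :
    ElemEmbeddable (M.pair (E.pair R)) (M.pair (E.pair R)) :=
  letI := codedStructure M E R
  elemEmbeddable_pair_iff.2 ⟨ElementaryEmbedding.refl LStd _⟩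

namespace LStd

open ZFSet

theorem rank_code_lt {o : Ordinal.{u}} (ho : IsSuccLimit o) {M E R : ZFSet.{u}}
    (hM : M.rank < o) (hE : ∀ p ∈ E, ∃ a ∈ M, ∃ b ∈ M, p = a.pair b) (hR : R ⊆ M) :
    (M.pair (E.pair R)).rank < o := by
  have hE_rank : E.rank ≤ succ (succ M.rank) := by
    refine rank_le_iff.2 fun p hp => ?_
    obtain ⟨a, ha, b, hb, rfl⟩ := hE p hp
    rw [rank_kpair]
    exact succ_lt_succ ((succ_le_of_lt (max_lt (rank_lt_of_mem ha) (rank_lt_of_mem hb))).trans_lt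
      (lt_succ _))
  refine rank_kpair_lt ho hM (rank_kpair_lt ho ?_ ((rank_mono hR).trans_lt hM))
  exact hE_rank.trans_lt (ho.succ_lt (ho.succ_lt hM))

section transport

variable {M N : ZFSet.{u}} (e : ↥M.toSet ≃ ↥N.toSet)

noncomputable def relImage (E : ZFSet.{u}) : ZFSet.{u} :=
  range fun p : {p : ↥M.toSet × ↥M.toSet // p.1.1.pair p.2.1 ∈ E} =>
    (e p.1.1).1.pair (e p.1.2).1

noncomputable def predImage (R : ZFSet.{u}) : ZFSet.{u} :=
  range fun a : {a : ↥M.toSet // a.1 ∈ R} => (e a).1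

noncomputable def transportCode (E R : ZFSet.{u}) : ZFSet.{u} :=
  N.pair ((relImage e E).pair (predImage e R))

theorem pair_mem_relImage {E : ZFSet.{u}} {a b : ↥M.toSet} :
    (e a).1.pair (e b).1 ∈ relImage e E ↔ a.1.pair b.1 ∈ E := by
  rw [relImage, mem_range]
  constructor
  · rintro ⟨⟨⟨a', b'⟩, h⟩, he⟩
    obtain ⟨ha, hb⟩ := pair_inj.1 he
    rw [Subtype.val_inj, e.injective.eq_iff] at ha hb
    subst ha hb
    exact h
  · exact fun h => ⟨⟨(a, b), h⟩, rfl⟩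

theorem mem_predImage {R : ZFSet.{u}} {a : ↥M.toSet} : (e a).1 ∈ predImage e R ↔ a.1 ∈ R := by
  rw [predImage, mem_range]
  constructor
  · rintro ⟨⟨a', h⟩, he⟩
    rw [Subtype.val_inj, e.injective.eq_iff] at he
    exact he ▸ h
  · exact fun h => ⟨⟨a, h⟩, rfl⟩

theorem exists_eq_pair_of_mem_relImage {E p : ZFSet.{u}} (hp : p ∈ relImage e E) :
    ∃ a ∈ N, ∃ b ∈ N, p = a.pair b := by
  obtain ⟨⟨⟨a, b⟩, -⟩, rfl⟩ := mem_range.1 hp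
  exact ⟨_, (e a).2, _, (e b).2, rfl⟩

theorem predImage_subset (R : ZFSet.{u}) : predImage e R ⊆ N := by
  intro x hx
  obtain ⟨⟨a, -⟩, rfl⟩ := mem_range.1 hx
  exact (e a).2

noncomputable def codedStructureEquiv (E R : ZFSet.{u}) :
    letI := codedStructure M E R
    letI := codedStructure N (relImage e E) (predImage e R)
    ↥M.toSet ≃[LStd] ↥N.toSet :=
  letI := codedStructure M E R
  letI := codedStructure N (relImage e E) (predImage e R)
  { toEquiv := e
    map_fun' := fun f => f.elim
    map_rel' := fun rel x => by
      cases rel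
      · exact pair_mem_relImage e
      · exact mem_predImage e }

theorem _root_.ElemEmbeddable.of_transportCode {M' N' : ZFSet.{u}} (e₁ : ↥M.toSet ≃ ↥M'.toSet)
    (e₂ : ↥N.toSet ≃ ↥N'.toSet) {E R F Q : ZFSet.{u}}
    (h : ElemEmbeddable (transportCode e₁ E R) (transportCode e₂ F Q)) :
    ElemEmbeddable (M.pair (E.pair R)) (N.pair (F.pair Q)) := by
  rw [transportCode, transportCode, elemEmbeddable_pair_iff] at h
  obtain ⟨j⟩ := h
  let _ := codedStructure M E R
  let _ := codedStructure N F Q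
  let _ := codedStructure M' (relImage e₁ E) (predImage e₁ R)
  let _ := codedStructure N' (relImage e₂ F) (predImage e₂ Q)
  exact elemEmbeddable_pair_iff.2 ⟨(codedStructureEquiv e₂ F Q).symm.toElementaryEmbedding.comp
    (j.comp (codedStructureEquiv e₁ E R).toElementaryEmbedding)⟩

end transport

noncomputable def ordinalEquiv (M : ZFSet.{u}) : ↥M.toSet ≃ ↥M.card.ord.toZFSet.toSet :=
  Classical.choice (Cardinal.eq.1 (mk_toSet_toZFSet_ord_card M).symm)

noncomputable def ordinalCopy (S : ZFSet.{u}) : ZFSet.{u} :=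
  transportCode (ordinalEquiv (unpair S).1) (unpair (unpair S).2).1 (unpair (unpair S).2).2

theorem ordinalCopy_pair (M E R : ZFSet.{u}) :
    ordinalCopy (M.pair (E.pair R)) = transportCode (ordinalEquiv M) E R := by
  rw [ordinalCopy, unpair_pair, unpair_pair]

theorem isOrdinalLStdCode_ordinalCopy (S : ZFSet.{u}) : IsOrdinalLStdCode (ordinalCopy S) :=
  ⟨_, _, _, rfl, isOrdinal_toZFSet _, fun _ => exists_eq_pair_of_mem_relImage _,
    predImage_subset _ _⟩

theorem rank_ordinalCopy_lt {κ : Cardinal.{u}} (hκ : κ.IsInaccessible) {M E R : ZFSet.{u}}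
    (hM : M.rank < κ.ord) : (ordinalCopy (M.pair (E.pair R))).rank < κ.ord := by
  rw [ordinalCopy_pair]
  refine rank_code_lt (isSuccLimit_ord hκ.aleph0_lt.le) ?_
    (fun _ => exists_eq_pair_of_mem_relImage _) (predImage_subset _ _)
  rw [rank_toZFSet]
  exact ord_lt_ord.2 (card_lt_of_rank_lt_ord hκ hM)

theorem _root_.ElemEmbeddable.of_ordinalCopy {M E R N F Q : ZFSet.{u}}
    (h : ElemEmbeddable (ordinalCopy (M.pair (E.pair R))) (ordinalCopy (N.pair (F.pair Q)))) :
    ElemEmbeddable (M.pair (E.pair R)) (N.pair (F.pair Q)) := by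
  rw [ordinalCopy_pair, ordinalCopy_pair] at h
  exact h.of_transportCode _ _

end LStd

/-- If `κ` is inaccessible and for every set `B ⊆ V_κ` of cardinality `κ` of ordinal
`L_std`-structures there are distinct `M, N ∈ B` with an `L_std`-elementary embedding
`j : M → N`, then `κ` is a Vopěnka cardinal. -/
theorem isVopenka_of_ordinal_structures (κ : Cardinal.{u}) (hκ : κ.IsInaccessible)
    (h : ∀ B : ZFSet.{u}, (∀ x ∈ B, x.rank < κ.ord) →
      Cardinal.mk ↥B.toSet = Cardinal.lift.{u + 1} κ →
      (∀ x ∈ B, IsOrdinalLStdCode x) →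
      ∃ M ∈ B, ∃ N ∈ B, M ≠ N ∧ ElemEmbeddable M N) :
    IsVopenka κ := by
  refine ⟨hκ, fun A hrank hcard hcode => VP.of_range LStd.ordinalCopy ?_
    (fun _ => elemEmbeddable_pair_self _ _ _)
    fun hinj => h _ ?_ (by rw [ZFSet.mk_range_of_injOn hinj, hcard]) ?_⟩
  · intro S hS T hT hST
    obtain ⟨M, E, R, rfl, -⟩ := hcode S hS
    obtain ⟨N, F, Q, rfl, -⟩ := hcode T hT
    exact hST.of_ordinalCopy
  · intro _ hx
    obtain ⟨⟨S, hS⟩, rfl⟩ := ZFSet.mem_range.1 hx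
    obtain ⟨M, E, R, rfl, -⟩ := hcode S hS
    exact LStd.rank_ordinalCopy_lt hκ ((ZFSet.rank_lt_rank_kpair_left _ _).trans (hrank _ hS))
  · intro _ hx
    obtain ⟨⟨S, -⟩, rfl⟩ := ZFSet.mem_range.1 hx
    exact LStd.isOrdinalLStdCode_ordinalCopy S
end

section
/- Let κ be an inaccessible cardinal, and suppose that for every set A ⊆ V_κ there is a cardinal α < κ that is extendible below κ for A. Then κ is a Vopěnka cardinal. -/
open FirstOrder

universe u

/-- The structure `⟨V_η, ∈, A ∩ V_η⟩`: the domain consists of the sets of rank `< η`, with `ε`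
interpreted as membership and `R` interpreted as membership in the class `A`. -/
def VStructure (η : Ordinal.{u}) (A : Set ZFSet.{u}) :
    LStd.Structure {x : ZFSet.{u} // x.rank < η} where
  funMap := fun f _ => f.elim
  RelMap
    | .eps, x => (x 0).1 ∈ (x 1).1
    | .r, x => (x 0).1 ∈ A

/-- The ZFC set `α` is a (von Neumann) cardinal: it is an ordinal and every one of its elements
has strictly smaller cardinality. -/
def ZFIsCardinal (α : ZFSet.{u}) : Prop :=
  α.IsOrdinal ∧ ∀ β ∈ α, Cardinal.mk ↥β.toSet < Cardinal.mk ↥α.toSet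

/-- For von Neumann ordinals `α`, `η`, `ζ` and a class `A`: there is an elementary embedding
`j : ⟨V_η, ∈, A ∩ V_η⟩ → ⟨V_ζ, ∈, A ∩ V_ζ⟩` with critical point `α` (i.e. `j` fixes every
ordinal `β < α` and moves `α`) such that `j α > η`. -/
def ExtWitness (A : Set ZFSet.{u}) (α η ζ : ZFSet.{u}) : Prop :=
  letI := VStructure η.rank A
  letI := VStructure ζ.rank A
  ∃ j : {x : ZFSet.{u} // x.rank < η.rank} ↪ₑ[LStd] {x : ZFSet.{u} // x.rank < ζ.rank},
    (∀ (β : ZFSet.{u}) (hβ : β.rank < η.rank), β ∈ α → (j ⟨β, hβ⟩).1 = β) ∧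
    ∀ hα : α.rank < η.rank, (j ⟨α, hα⟩).1 ≠ α ∧ η ∈ (j ⟨α, hα⟩).1

/-- `α` is `η`-extendible below `κ` for `A`: there are `ζ < κ` and an elementary embedding
`j : ⟨V_η, ∈, A ∩ V_η⟩ → ⟨V_ζ, ∈, A ∩ V_ζ⟩` with critical point `α` and `j α > η`. -/
def EtaExtendibleBelow (κ : Cardinal.{u}) (A : Set ZFSet.{u}) (α η : ZFSet.{u}) : Prop :=
  ∃ ζ : ZFSet.{u}, ζ.IsOrdinal ∧ ζ.rank < κ.ord ∧ ExtWitness A α η ζ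

/-- `α` is extendible below `κ` for `A`: it is `η`-extendible below `κ` for `A` for every
ordinal `η` with `α < η < κ`. -/
def ExtendibleBelow (κ : Cardinal.{u}) (A : Set ZFSet.{u}) (α : ZFSet.{u}) : Prop :=
  ∀ η : ZFSet.{u}, η.IsOrdinal → α ∈ η → η.rank < κ.ord → EtaExtendibleBelow κ A α η

/-!
Tag every member `M` of `A` with its rank, `B = {(rank M, M) : M ∈ A}`, and let `α` be extendible
below `κ` for `B`. As `|A| = κ > |V_α|`, some `M ∈ A` has rank at least `α`. Take `η` above the
rank of `t = (rank M, M)` and an embedding `j : ⟨V_η, ∈, B⟩ → ⟨V_ζ, ∈, B⟩` with critical point `α`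
and `j α > η`. Then `j t = (j (rank M), j M) ∈ B`, so `j M ∈ A` and `j (rank M) = rank (j M)`;
since `j` moves every ordinal `δ ≥ α` of `V_η`, `j M ≠ M`. Finally, satisfaction in a structure
coded by a set of `V_η` is definable over `⟨V_η, ∈⟩` uniformly in the code, so `j` restricts to an
elementary embedding of `M` into `j M`.
-/

open FirstOrder.Language ZFSet

namespace ZFSet

theorem singleton_mem_pair (x y : ZFSet.{u}) : {x} ∈ pair x y := mem_pair.2 (Or.inl rfl)

theorem insert_mem_pair (x y : ZFSet.{u}) : {x, y} ∈ pair x y := mem_pair.2 (Or.inr rfl)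

theorem rank_lt_rank_pair_left (x y : ZFSet.{u}) : x.rank < (pair x y).rank :=
  (rank_lt_of_mem (mem_singleton.2 rfl)).trans (rank_lt_of_mem (singleton_mem_pair x y))

theorem rank_lt_rank_pair_right (x y : ZFSet.{u}) : y.rank < (pair x y).rank :=
  (rank_lt_of_mem (mem_pair.2 (Or.inr rfl))).trans (rank_lt_of_mem (insert_mem_pair x y))

theorem rank_pair_lt {x y : ZFSet.{u}} {o : Ordinal.{u}} (ho : Order.IsSuccLimit o)
    (hx : x.rank < o) (hy : y.rank < o) : (pair x y).rank < o := by
  simp only [pair, rank_pair, rank_singleton, max_lt_iff, ho.succ_lt_iff]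
  exact ⟨hx, hx, hy⟩

theorem exists_mem_le_rank {κ : Cardinal.{u}} (hκ : κ.IsInaccessible) {A : ZFSet.{u}}
    (hA : card A = κ) {β : Ordinal.{u}} (hβ : β < κ.ord) : ∃ x ∈ A, β ≤ x.rank := by
  by_contra! hsmall
  have hsub : A ⊆ V_ β := fun x hx => mem_vonNeumann.2 (hsmall x hx)
  have := (card_mono hsub).trans_lt (card_vonNeumann β ▸ Cardinal.preBeth_lt_preBeth.2 hβ)
  rw [hκ.preBeth_ord, hA] at this
  exact this.false

noncomputable def rankTagged (A : ZFSet.{u}) : ZFSet.{u} :=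
  range fun M : A => pair M.1.rank.toZFSet M.1

theorem pair_mem_rankTagged {A M : ZFSet.{u}} (hM : M ∈ A) :
    pair M.rank.toZFSet M ∈ rankTagged A :=
  mem_range_self (⟨M, hM⟩ : A)

theorem exists_of_mem_rankTagged {A t : ZFSet.{u}} (ht : t ∈ rankTagged A) :
    ∃ M ∈ A, pair M.rank.toZFSet M = t := by
  obtain ⟨⟨M, hM⟩, rfl⟩ := mem_range.1 ht
  exact ⟨M, hM, rfl⟩

theorem rank_lt_of_mem_rankTagged {A : ZFSet.{u}} {o : Ordinal.{u}} (ho : Order.IsSuccLimit o)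
    (hA : ∀ x ∈ A, x.rank < o) {t : ZFSet.{u}} (ht : t ∈ rankTagged A) : t.rank < o := by
  obtain ⟨M, hM, rfl⟩ := exists_of_mem_rankTagged ht
  exact rank_pair_lt ho ((Ordinal.rank_toZFSet _).trans_lt (hA M hM)) (hA M hM)

end ZFSet

theorem FirstOrder.Language.BoundedFormula.realize_relabel_id {L : Language} {M : Type*}
    [L.Structure M] {α : Type*} {n : ℕ} (φ : L.Formula (α ⊕ Fin n)) (v : α → M)
    (xs : Fin n → M) : (relabel id φ : L.BoundedFormula α n).Realize v xs ↔
      φ.Realize (Sum.elim v xs) := by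
  rw [realize_relabel, Formula.Realize, Fin.castAdd_zero, Fin.cast_refl, Function.comp_id,
    Function.comp_id]
  exact iff_of_eq (congrArg _ (Subsingleton.elim _ _))

abbrev RankLt (θ : Ordinal.{u}) : Type (u + 1) := {x : ZFSet.{u} // x.rank < θ}

theorem RankLt.val_eq_iff {θ : Ordinal.{u}} {s : RankLt θ} {t : ZFSet.{u}} (ht : t.rank ≤ θ) :
    s.1 = t ↔ ∀ z : RankLt θ, z.1 ∈ s.1 ↔ z.1 ∈ t := by
  refine ⟨fun h z => h ▸ Iff.rfl, fun h => ZFSet.ext fun z => ⟨fun hz => ?_, fun hz => ?_⟩⟩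
  · exact (h ⟨z, (rank_lt_of_mem hz).trans s.2⟩).1 hz
  · exact (h ⟨z, (rank_lt_of_mem hz).trans_le ht⟩).2 hz

namespace LStd

section Formulas

variable {α : Type*}

def mem (x y : α) : LStd.Formula α := Relations.formula₂ (L := LStd) .eps (var x) (var y)

def pred (x : α) : LStd.Formula α := Relations.formula₁ (L := LStd) .r (var x)

noncomputable def isSingleton (a s : α) : LStd.Formula α :=
  Formula.iAlls (Fin 1) ((mem (.inr 0) (.inl s)).iff ((var (.inr 0)).equal (var (.inl a))))

noncomputable def isDoubleton (a b d : α) : LStd.Formula α :=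
  Formula.iAlls (Fin 1) ((mem (.inr 0) (.inl d)).iff
    ((var (.inr 0)).equal (var (.inl a)) ⊔ (var (.inr 0)).equal (var (.inl b))))

/-- The components `{a}` and `{a, b}` are quantified existentially so that the formula defines the
pair in every `V_θ`, not only for limit `θ`. -/
noncomputable def isPair (a b p : α) : LStd.Formula α :=
  Formula.iExs (Fin 2) (isSingleton (.inl a) (.inr 0) ⊓ isDoubleton (.inl a) (.inl b) (.inr 1) ⊓
    isDoubleton (.inr 0) (.inr 1) (.inl p))

noncomputable def pairMem (a b e : α) : LStd.Formula α :=
  Formula.iExs (Fin 1) (mem (.inr 0) (.inl e) ⊓ isPair (.inl a) (.inl b) (.inr 0))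

variable {θ : Ordinal.{u}} {𝒜 : Set ZFSet.{u}} (v : α → RankLt θ)

theorem realize_mem (x y : α) :
    letI := VStructure θ 𝒜
    (mem x y).Realize v ↔ (v x).1 ∈ (v y).1 :=
  Iff.rfl

theorem realize_pred (x : α) :
    letI := VStructure θ 𝒜
    (pred x).Realize v ↔ (v x).1 ∈ 𝒜 :=
  Iff.rfl

theorem realize_isSingleton (a s : α) :
    letI := VStructure θ 𝒜
    (isSingleton a s).Realize v ↔ (v s).1 = {(v a).1} := by
  rw [RankLt.val_eq_iff (by simpa [rank_singleton] using (v a).2)]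
  simp [isSingleton, Fin.forall_fin_succ_pi, realize_mem, Subtype.ext_iff]

theorem realize_isDoubleton (a b d : α) :
    letI := VStructure θ 𝒜
    (isDoubleton a b d).Realize v ↔ (v d).1 = {(v a).1, (v b).1} := by
  rw [RankLt.val_eq_iff (by simpa [rank_pair] using ⟨(v a).2, (v b).2⟩)]
  simp [isDoubleton, Fin.forall_fin_succ_pi, realize_mem, Subtype.ext_iff]

theorem realize_isPair (a b p : α) :
    letI := VStructure θ 𝒜
    (isPair a b p).Realize v ↔ (v p).1 = pair (v a).1 (v b).1 := by
  simp only [isPair, Formula.realize_iExs, Formula.realize_inf, realize_isSingleton,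
    realize_isDoubleton, Sum.elim_inl, Sum.elim_inr, Fin.exists_fin_succ_pi, Fin.cons_zero,
    Fin.cons_one, exists_const]
  refine ⟨fun ⟨s, d, ⟨hs, hd⟩, hp⟩ => by rw [hp, hs, hd]; rfl, fun hp => ?_⟩
  have hlt : ∀ x ∈ (v p).1, x.rank < θ := fun x hx => (rank_lt_of_mem hx).trans (v p).2
  exact ⟨⟨_, hlt _ (hp ▸ singleton_mem_pair _ _)⟩, ⟨_, hlt _ (hp ▸ insert_mem_pair _ _)⟩,
    ⟨rfl, rfl⟩, hp⟩

theorem realize_pairMem (a b e : α) :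
    letI := VStructure θ 𝒜
    (pairMem a b e).Realize v ↔ pair (v a).1 (v b).1 ∈ (v e).1 := by
  simp only [pairMem, Formula.realize_iExs, Formula.realize_inf, realize_mem, realize_isPair,
    Sum.elim_inl, Sum.elim_inr, Fin.exists_fin_succ_pi, Fin.cons_zero, exists_const]
  exact ⟨fun ⟨q, hq, hqp⟩ => hqp ▸ hq, fun h => ⟨⟨_, (rank_lt_of_mem h).trans (v e).2⟩, h, rfl⟩⟩

end Formulas

/-- `L_std` has no function symbols, so every term is a variable. -/
def termVar {α : Type*} : LStd.Term α → α
  | var a => a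
  | func f _ => Empty.elim f

theorem realize_termVar {α M : Type*} [LStd.Structure M] (v : α → M) (t : LStd.Term α) :
    t.realize v = v (termVar t) := by
  cases t with
  | var a => rfl
  | func f _ => exact Empty.elim f

theorem relMap_codedStructure_eps {D E R : ZFSet.{u}} (x : Fin 2 → ↥D.toSet) :
    (codedStructure D E R).RelMap (LStdRel.eps : LStd.Relations 2) x ↔
      pair (x 0).1 (x 1).1 ∈ E := Iff.rfl

theorem relMap_codedStructure_r {D E R : ZFSet.{u}} (x : Fin 1 → ↥D.toSet) :
    (codedStructure D E R).RelMap (LStdRel.r : LStd.Relations 1) x ↔ (x 0).1 ∈ R := Iff.rfl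

abbrev liftVar {β : Type} {k : ℕ} : β ⊕ Fin k → (β ⊕ Fin 3) ⊕ Fin k := Sum.map Sum.inl id

/-- The translation of a formula about the structure coded by `⟨D, E, R⟩` into a formula about
`⟨V_θ, ∈⟩` with the extra parameters `D, E, R` as the free variables `Sum.inr 0, 1, 2`:
quantifiers are bounded by `D`, `x ε y` becomes `(x, y) ∈ E` and `R x` becomes `x ∈ R`. -/
noncomputable def codedFormula :
    ∀ {β : Type} {k : ℕ}, LStd.BoundedFormula β k → LStd.BoundedFormula (β ⊕ Fin 3) k
  | _, _, .falsum => .falsum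
  | _, _, .equal t₁ t₂ =>
      .relabel id (Term.equal (var (liftVar (termVar t₁))) (var (liftVar (termVar t₂))))
  | _, _, .rel .eps ts =>
      .relabel id (pairMem (liftVar (termVar (ts 0))) (liftVar (termVar (ts 1))) (.inl (.inr 1)))
  | _, _, .rel .r ts => .relabel id (mem (liftVar (termVar (ts 0))) (.inl (.inr 2)))
  | _, _, .imp φ ψ => (codedFormula φ).imp (codedFormula ψ)
  | _, k, .all φ =>
      ((BoundedFormula.relabel id (mem (.inr (Fin.last k)) (.inl (.inr 0)))).imp
        (codedFormula φ)).all

section Coded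

variable {θ : Ordinal.{u}} {D : ZFSet.{u}}

def inclRankLt (hD : D.rank < θ) (x : ↥D.toSet) : RankLt θ :=
  ⟨x.1, (rank_lt_of_mem x.2).trans hD⟩

theorem inclRankLt_injective (hD : D.rank < θ) : Function.Injective (inclRankLt hD) :=
  fun x y h => Subtype.ext (show x.1 = y.1 from congrArg (·.1) h)

theorem elim_liftVar {β : Type} {k : ℕ} (hD : D.rank < θ) (v : β → ↥D.toSet)
    (p : Fin 3 → RankLt θ) (w : Fin k → ↥D.toSet) (x : β ⊕ Fin k) :
    Sum.elim (Sum.elim (inclRankLt hD ∘ v) p) (inclRankLt hD ∘ w) (liftVar x) =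
      inclRankLt hD (Sum.elim v w x) := by
  cases x <;> rfl

theorem realize_codedFormula {𝒜 : Set ZFSet.{u}} {E R : ZFSet.{u}} (hD : D.rank < θ)
    (hE : E.rank < θ) (hR : R.rank < θ) {β : Type} {k : ℕ} (φ : LStd.BoundedFormula β k)
    (v : β → ↥D.toSet) (w : Fin k → ↥D.toSet) :
    letI := VStructure θ 𝒜
    letI := codedStructure D E R
    (codedFormula φ).Realize (Sum.elim (inclRankLt hD ∘ v) ![⟨D, hD⟩, ⟨E, hE⟩, ⟨R, hR⟩])
      (inclRankLt hD ∘ w) ↔ φ.Realize v w := by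
  let := VStructure θ 𝒜
  let := codedStructure D E R
  induction φ with
  | falsum => simp only [codedFormula, BoundedFormula.Realize]
  | equal t₁ t₂ =>
    simp only [codedFormula, BoundedFormula.realize_relabel_id, Formula.realize_equal,
      elim_liftVar, (inclRankLt_injective hD).eq_iff, BoundedFormula.Realize,
      realize_termVar, termVar]
  | rel R ts =>
    cases R with
    | eps =>
      simp only [codedFormula, BoundedFormula.realize_relabel_id, realize_pairMem, elim_liftVar,
        BoundedFormula.Realize, relMap_codedStructure_eps, realize_termVar]
      rfl
    | r =>
      simp only [codedFormula, BoundedFormula.realize_relabel_id, realize_mem, elim_liftVar,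
        BoundedFormula.Realize, relMap_codedStructure_r, realize_termVar]
      rfl
  | imp φ ψ ihφ ihψ =>
    simp only [codedFormula, BoundedFormula.realize_imp, ihφ, ihψ]
  | all φ ih =>
    simp only [codedFormula, BoundedFormula.realize_all, BoundedFormula.realize_imp,
      BoundedFormula.realize_relabel_id, realize_mem, Sum.elim_inr, Sum.elim_inl, Fin.snoc_last]
    refine ⟨fun h x => ?_, fun h a ha => ?_⟩
    · have := h (inclRankLt hD x) x.2
      rw [← Fin.comp_snoc] at this
      exact (ih _).1 this
    · have := (ih (Fin.snoc w ⟨a.1, ha⟩)).2 (h _)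
      rwa [Fin.comp_snoc] at this

end Coded

end LStd

abbrev VEmbedding (θ θ' : Ordinal.{u}) (𝒜 : Set ZFSet.{u}) : Type (u + 1) :=
  @ElementaryEmbedding LStd (RankLt θ) (RankLt θ') (VStructure θ 𝒜) (VStructure θ' 𝒜)

namespace VEmbedding

open LStd

variable {θ θ' : Ordinal.{u}} {𝒜 : Set ZFSet.{u}} (j : VEmbedding θ θ' 𝒜)

theorem mem_iff (a b : RankLt θ) : (j a).1 ∈ (j b).1 ↔ a.1 ∈ b.1 := by
  let := VStructure θ 𝒜
  let := VStructure θ' 𝒜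
  simpa [realize_mem, -ElementaryEmbedding.map_formula] using j.map_formula (mem 0 1) ![a, b]

theorem mem_pred_iff (a : RankLt θ) : (j a).1 ∈ 𝒜 ↔ a.1 ∈ 𝒜 := by
  let := VStructure θ 𝒜
  let := VStructure θ' 𝒜
  simpa [realize_pred, -ElementaryEmbedding.map_formula] using j.map_formula (pred 0) ![a]

theorem map_pair {a b p : RankLt θ} (h : p.1 = pair a.1 b.1) :
    (j p).1 = pair (j a).1 (j b).1 := by
  let := VStructure θ 𝒜
  let := VStructure θ' 𝒜
  have := (j.map_formula (isPair 0 1 2) ![a, b, p]).2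
  simpa [realize_isPair, -ElementaryEmbedding.map_formula] using
    this (by simpa [realize_isPair, -ElementaryEmbedding.map_formula] using h)

def restrictCoded {D E R : ZFSet.{u}} (hD : D.rank < θ) (hE : E.rank < θ) (hR : R.rank < θ) :
    letI := codedStructure D E R
    letI := codedStructure (j ⟨D, hD⟩).1 (j ⟨E, hE⟩).1 (j ⟨R, hR⟩).1
    ↥D.toSet ↪ₑ[LStd] ↥(j ⟨D, hD⟩).1.toSet :=
  letI := VStructure θ 𝒜
  letI := VStructure θ' 𝒜
  letI := codedStructure D E R
  letI := codedStructure (j ⟨D, hD⟩).1 (j ⟨E, hE⟩).1 (j ⟨R, hR⟩).1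
  { toFun := fun x => ⟨(j (inclRankLt hD x)).1, (j.mem_iff _ ⟨D, hD⟩).2 x.2⟩
    map_formula' := fun n φ x => by
      refine (realize_codedFormula (𝒜 := 𝒜) (j ⟨D, hD⟩).2 (j ⟨E, hE⟩).2 (j ⟨R, hR⟩).2 φ _
        default).symm.trans (Iff.trans (iff_of_eq (congrArg₂ _ ?_ (Subsingleton.elim _ _)))
        ((j.map_boundedFormula _ _ _).trans (realize_codedFormula hD hE hR φ x default)))
      funext i
      rcases i with i | i
      · rfl
      · fin_cases i <;> rfl }

theorem elemEmbeddable {S : RankLt θ} {D E R : ZFSet.{u}} (hS : S.1 = D.pair (E.pair R)) :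
    ElemEmbeddable S.1 (j S).1 := by
  have hER : (E.pair R).rank < θ := (rank_lt_rank_pair_right D _).trans (hS ▸ S.2)
  have hD : D.rank < θ := (rank_lt_rank_pair_left _ (E.pair R)).trans (hS ▸ S.2)
  have hE : E.rank < θ := (rank_lt_rank_pair_left _ _).trans hER
  have hR : R.rank < θ := (rank_lt_rank_pair_right _ _).trans hER
  refine ⟨D, E, R, (j ⟨D, hD⟩).1, (j ⟨E, hE⟩).1, (j ⟨R, hR⟩).1, hS, ?_,
    ⟨j.restrictCoded hD hE hR⟩⟩
  rw [j.map_pair (a := ⟨D, hD⟩) (b := ⟨_, hER⟩) hS,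
    j.map_pair (a := ⟨E, hE⟩) (b := ⟨R, hR⟩) (p := ⟨_, hER⟩) rfl]

theorem map_ne_of_crit_le {α δ : RankLt θ} (hα : α.1.IsOrdinal) (hδ : δ.1.IsOrdinal)
    (hαδ : α.1.rank ≤ δ.1.rank) (hjα : (j α).1 ≠ α.1) (hθ : θ < (j α).1.rank) :
    (j δ).1 ≠ δ.1 := by
  rcases (hα.subset_iff_eq_or_mem hδ).1 ((hα.rank_le_iff_subset hδ).1 hαδ) with h | h
  · rwa [← Subtype.ext h]
  · intro hfix
    have := (rank_lt_of_mem ((j.mem_iff α δ).2 h)).trans_eq (congrArg rank hfix)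
    exact (hθ.trans this).not_gt δ.2

theorem vp_of_map_ne {A : ZFSet.{u}} (j : VEmbedding θ θ' (rankTagged A).toSet)
    {M δ t : RankLt θ} (hM : M.1 ∈ A) (hcode : IsLStdCode M.1) (hδ : δ.1 = M.1.rank.toZFSet)
    (ht : t.1 = pair δ.1 M.1) (hjδ : (j δ).1 ≠ δ.1) : VP A := by
  have hjt : pair (j δ).1 (j M).1 ∈ rankTagged A := by
    rw [← j.map_pair ht]
    refine (j.mem_pred_iff t).2 ?_
    rw [ht, hδ]
    exact pair_mem_rankTagged hM
  obtain ⟨N, hN, hNt⟩ := exists_of_mem_rankTagged hjt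
  obtain ⟨hjδN, rfl⟩ := pair_injective hNt
  refine ⟨M.1, hM, (j M).1, hN, fun hfix => hjδ ?_, ?_⟩
  · rw [← hjδN, ← hfix, hδ]
  · obtain ⟨D, E, R, hMDER, -⟩ := hcode
    exact j.elemEmbeddable hMDER

end VEmbedding

/-- If `κ` is inaccessible and for every set `A ⊆ V_κ` there is a cardinal `α < κ` that is
extendible below `κ` for `A`, then `κ` is a Vopěnka cardinal. -/
theorem isVopenka_of_extendibleBelow (κ : Cardinal.{u}) (hκ : κ.IsInaccessible)
    (h : ∀ A : ZFSet.{u}, (∀ x ∈ A, x.rank < κ.ord) →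
      ∃ α : ZFSet.{u}, ZFIsCardinal α ∧ α.rank < κ.ord ∧ ExtendibleBelow κ A.toSet α) :
    IsVopenka κ := by
  refine ⟨hκ, fun A hA hcard hcode => ?_⟩
  have hκlim : Order.IsSuccLimit κ.ord := Cardinal.isSuccLimit_ord hκ.aleph0_lt.le
  obtain ⟨α, ⟨hα, -⟩, hακ, hext⟩ := h (rankTagged A) fun _ =>
    rank_lt_of_mem_rankTagged hκlim hA
  obtain ⟨M, hM, hαM⟩ :=
    exists_mem_le_rank hκ (Cardinal.lift_inj.1 (cardinalMk_coe_sort.symm.trans hcard)) hακ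
  set δ := M.rank.toZFSet
  have htκ : (pair δ M).rank < κ.ord :=
    rank_lt_of_mem_rankTagged hκlim hA (pair_mem_rankTagged hM)
  set η := (Order.succ (pair δ M).rank).toZFSet
  have htη : (pair δ M).rank < η.rank := by simp [η]
  have hMη : M.rank < η.rank := (rank_lt_rank_pair_right δ M).trans htη
  have hδη : δ.rank < η.rank := (Ordinal.rank_toZFSet _).trans_lt hMη
  have hαη : α.rank < η.rank := hαM.trans_lt hMη
  obtain ⟨ζ, -, -, j, -, hcrit⟩ := hext η (isOrdinal_toZFSet _)
    ((hα.rank_lt_iff_mem (isOrdinal_toZFSet _)).1 hαη) (by simpa [η] using hκlim.succ_lt htκ)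
  obtain ⟨hjα, hηjα⟩ := hcrit hαη
  refine VEmbedding.vp_of_map_ne (M := ⟨M, hMη⟩) (δ := ⟨δ, hδη⟩) (t := ⟨_, htη⟩) j hM
    (hcode M hM) rfl rfl ?_
  exact VEmbedding.map_ne_of_crit_le j (α := ⟨α, hαη⟩) hα (isOrdinal_toZFSet _)
    (hαM.trans_eq (Ordinal.rank_toZFSet _).symm) hjα (rank_lt_of_mem hηjα)
end
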